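/- With notation as above ($\rho_0,\ldots,\rho_l$ rays of a smooth complete fan with $b_0<0$, $l>2$, $\alpha$ the unique index with $\rho_\alpha = -\rho_0$), define $\gamma = \sum_{i=1}^{\alpha-1}(3 - b_i) - 3$. Then $\gamma \geq 0$ and $b_0 + b_\alpha - \gamma \geq 0$. -/

import Mathlib

/-- The determinant of two vectors in `ℤ²`. -/
def det2 (v w : ℤ × ℤ) : ℤ := v.1 * w.2 - v.2 * w.1

/-- The combinatorial data of a smooth complete toric surface: primitive ray generators
`ρ 0, …, ρ l` in counterclockwise cyclic order (each consecutive pair is a positively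
oriented basis of `ℤ²`), self-intersection data `b` with `b i • ρ i = ρ (i-1) + ρ (i+1)`,
the cones covering the plane, and distinct cones having disjoint interiors. -/
structure SmoothCompleteFan (l : ℕ) where
  ρ : ZMod (l + 1) → ℤ × ℤ
  b : ZMod (l + 1) → ℤ
  inj : Function.Injective ρ
  smooth_ccw : ∀ i, det2 (ρ i) (ρ (i + 1)) = 1
  rel : ∀ i, b i • ρ i = ρ (i - 1) + ρ (i + 1)
  complete : ∀ v : ℤ × ℤ, ∃ (i : ZMod (l + 1)) (a c : ℕ),
      v = (a : ℤ) • ρ i + (c : ℤ) • ρ (i + 1)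
  proper : ∀ i j : ZMod (l + 1), i ≠ j → ∀ v : ℤ × ℤ,
      ¬ ((∃ a c : ℕ, 0 < a ∧ 0 < c ∧ v = (a : ℤ) • ρ i + (c : ℤ) • ρ (i + 1)) ∧
         (∃ a c : ℕ, 0 < a ∧ 0 < c ∧ v = (a : ℤ) • ρ j + (c : ℤ) • ρ (j + 1)))

/-!
Write `Y k = det2 (ρ 0) (ρ k)`. Properness of the fan forces `Y > 0` on the rays strictly between
`ρ 0` and `ρ α = -ρ 0`, and `Y < 0` on those after `ρ α`: both arcs are half turns.
Along a half turn `v 0, …, v n = -v 0` one has `∑_{i=1}^{n-1} (3 - b i) = 3 + det2 (v 1) (v (n-1))`: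
at the last maximum of `Y` an interior vector is the sum of its neighbours, contracting it
preserves both sides, and the chain `v 0, v 1, -v 0` is the base case. Hence
`γ = det2 (ρ 1) (ρ (α - 1))`, while in the basis `(ρ 0, ρ 1)` one computes
`b 0 + b α - γ = det2 (ρ (α + 1)) (ρ l)`. Both are nonnegative because along a half turn
`det2 (v 1) (v i)` stays nonnegative, by the Plücker relation.
-/

open Finset

lemma det2_self (v : ℤ × ℤ) : det2 v v = 0 := by unfold det2; ring

lemma det2_anticomm (v w : ℤ × ℤ) : det2 v w = -det2 w v := by unfold det2; ring

lemma det2_neg_left (v w : ℤ × ℤ) : det2 (-v) w = -det2 v w := by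
  simp only [det2, Prod.fst_neg, Prod.snd_neg]; ring

lemma det2_neg_right (v w : ℤ × ℤ) : det2 v (-w) = -det2 v w := by
  simp only [det2, Prod.fst_neg, Prod.snd_neg]; ring

lemma det2_sub_right (u v w : ℤ × ℤ) : det2 u (v - w) = det2 u v - det2 u w := by
  simp only [det2, Prod.fst_sub, Prod.snd_sub]; ring

lemma det2_sub_left (u v w : ℤ × ℤ) : det2 (u - v) w = det2 u w - det2 v w := by
  simp only [det2, Prod.fst_sub, Prod.snd_sub]; ring

lemma det2_add_right (u v w : ℤ × ℤ) : det2 u (v + w) = det2 u v + det2 u w := by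
  simp only [det2, Prod.fst_add, Prod.snd_add]; ring

lemma det2_smul_left (t : ℤ) (v w : ℤ × ℤ) : det2 (t • v) w = t * det2 v w := by
  simp only [det2, Prod.smul_fst, Prod.smul_snd, smul_eq_mul]; ring

lemma det2_smul_right (t : ℤ) (v w : ℤ × ℤ) : det2 v (t • w) = t * det2 v w := by
  simp only [det2, Prod.smul_fst, Prod.smul_snd, smul_eq_mul]; ring

lemma det2_plucker (a b c d : ℤ × ℤ) :
    det2 a b * det2 c d - det2 a c * det2 b d + det2 a d * det2 b c = 0 := by
  unfold det2; ring

lemma eq_det2_smul_add_det2_smul {u v : ℤ × ℤ} (h : det2 u v = 1) (w : ℤ × ℤ) :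
    w = det2 w v • u + det2 u w • v := by
  unfold det2 at h
  ext
  · simp only [det2, Prod.fst_add, Prod.smul_fst, smul_eq_mul]
    linear_combination (-w.1) * h
  · simp only [det2, Prod.snd_add, Prod.smul_snd, smul_eq_mul]
    linear_combination (-w.2) * h

lemma det2_eq_of_det2_eq_one {e f : ℤ × ℤ} (h : det2 e f = 1) (x y : ℤ × ℤ) :
    det2 x y = det2 e x * det2 f y - det2 e y * det2 f x := by
  linear_combination det2_plucker e f x y - det2 x y * h

lemma sum_range_add_add {M : Type*} [AddCommMonoid M] (f : ℕ → M) (a k r : ℕ) :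
    ∑ i ∈ range (a + k + r), f i
      = ∑ i ∈ range a, f i + ∑ i ∈ range k, f (a + i) + ∑ i ∈ range r, f (a + k + i) := by
  rw [sum_range_add, sum_range_add, add_assoc]

/-- The rays `v 0, …, v n` of a smooth fan sweeping, counterclockwise, the closed half-plane
from `v 0` to `v n = -v 0`. -/
structure IsHalfTurn (v : ℕ → ℤ × ℤ) (n : ℕ) : Prop where
  det2_succ_eq_one : ∀ i < n, det2 (v i) (v (i + 1)) = 1
  det2_first_pos : ∀ i, 0 < i → i < n → 0 < det2 (v 0) (v i)
  last_eq_neg : v n = -v 0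

def eraseIdx {α : Type*} (v : ℕ → α) (k i : ℕ) : α := if i < k then v i else v (i + 1)

lemma eraseIdx_of_lt {α : Type*} (v : ℕ → α) {k i : ℕ} (h : i < k) : eraseIdx v k i = v i :=
  if_pos h

lemma eraseIdx_of_le {α : Type*} (v : ℕ → α) {k i : ℕ} (h : k ≤ i) :
    eraseIdx v k i = v (i + 1) :=
  if_neg (Nat.not_lt.mpr h)

/-- `∑ (3 - b i)` over the interior vectors `v 1, …, v (m + 1)` of a chain `v 0, …, v (m + 2)`,
where `b i = det2 (v (i - 1)) (v (i + 1))`; the summation index is shifted down by one. -/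
def interiorSum (v : ℕ → ℤ × ℤ) (m : ℕ) : ℤ := ∑ i ∈ range (m + 1), (3 - det2 (v i) (v (i + 2)))

namespace IsHalfTurn

variable {v : ℕ → ℤ × ℤ} {m n j : ℕ}

lemma exists_eq_add (h : IsHalfTurn v (m + 3)) :
    ∃ j ≤ m, v (j + 2) = v (j + 1) + v (j + 3) := by
  set Y : ℕ → ℤ := fun i => det2 (v 0) (v i) with hY
  have hYlast : Y (m + 3) = 0 := by simp [hY, h.last_eq_neg, det2_neg_right, det2_self]
  have hY1 : Y 1 = 1 := h.det2_succ_eq_one 0 (by omega)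
  -- `k` is the last index at which `Y` attains its maximum over the interior
  obtain ⟨k, hk, hmax⟩ := (Icc 1 (m + 2)).exists_max_image (fun i => toLex (Y i, i))
    ⟨1, by simp⟩
  rw [mem_Icc] at hk
  have hle : ∀ i, 1 ≤ i → i ≤ m + 2 → Y i ≤ Y k := fun i h1 h2 => by
    have := Prod.Lex.toLex_le_toLex.mp (hmax i (mem_Icc.mpr ⟨h1, h2⟩))
    omega
  have hlt : ∀ i, k < i → i ≤ m + 2 → Y i < Y k := fun i h1 h2 => by
    have := Prod.Lex.toLex_le_toLex.mp (hmax i (mem_Icc.mpr ⟨by omega, h2⟩))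
    omega
  have hpos : ∀ i, 0 < i → i < m + 3 → 0 < Y i := h.det2_first_pos
  obtain ⟨j, rfl⟩ : ∃ j, k = j + 2 := by
    refine ⟨k - 2, ?_⟩
    by_contra hk1
    obtain rfl : k = 1 := by omega
    have := hlt 2 (by omega) (by omega)
    have := hpos 2 (by omega) (by omega)
    omega
  have hprev : Y (j + 1) ≤ Y (j + 2) := hle (j + 1) (by omega) (by omega)
  have hnext : Y (j + 3) < Y (j + 2) := by
    rcases Nat.lt_or_ge (j + 2) (m + 2) with hj | hj
    · exact hlt (j + 3) (by omega) (by omega)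
    · rw [show j + 3 = m + 3 by omega, hYlast]; exact hpos (j + 2) (by omega) (by omega)
  have hnext0 : 0 ≤ Y (j + 3) := by
    rcases Nat.lt_or_ge (j + 3) (m + 3) with hj | hj
    · exact (hpos (j + 3) (by omega) hj).le
    · rw [show j + 3 = m + 3 by omega, hYlast]
  have hrec : Y (j + 1) + Y (j + 3) = Y (j + 2) * det2 (v (j + 1)) (v (j + 3)) := by
    have hp := det2_plucker (v 0) (v (j + 1)) (v (j + 2)) (v (j + 3))
    rw [h.det2_succ_eq_one (j + 1) (by omega), h.det2_succ_eq_one (j + 2) (by omega)] at hp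
    linear_combination hp
  -- `0 < Y (j + 1) + Y (j + 3) < 2 * Y (j + 2)` forces the middle `b` to be `1`
  have hb : det2 (v (j + 1)) (v (j + 3)) = 1 := by
    have := hpos (j + 1) (by omega) (by omega)
    nlinarith
  refine ⟨j, by omega, ?_⟩
  have hc := eq_det2_smul_add_det2_smul (h.det2_succ_eq_one (j + 1) (by omega)) (v (j + 3))
  rw [hb, det2_anticomm, h.det2_succ_eq_one (j + 2) (by omega)] at hc
  rw [hc]
  module

lemma det2_of_eq_add (h : IsHalfTurn v (m + 3)) (hj : j ≤ m)
    (hv : v (j + 2) = v (j + 1) + v (j + 3)) : det2 (v (j + 1)) (v (j + 3)) = 1 := by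
  rw [← h.det2_succ_eq_one (j + 1) (by omega), hv, det2_add_right, det2_self, zero_add]

lemma contract (h : IsHalfTurn v (m + 3)) (hj : j ≤ m)
    (hv : v (j + 2) = v (j + 1) + v (j + 3)) : IsHalfTurn (eraseIdx v (j + 2)) (m + 2) where
  det2_succ_eq_one i hi := by
    rcases lt_trichotomy (i + 1) (j + 2) with hij | hij | hij
    · rw [eraseIdx_of_lt v hij, eraseIdx_of_lt v (by omega)]
      exact h.det2_succ_eq_one i (by omega)
    · rw [eraseIdx_of_lt v (by omega), eraseIdx_of_le v hij.ge, show i = j + 1 by omega]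
      exact h.det2_of_eq_add hj hv
    · rw [eraseIdx_of_le v (by omega), eraseIdx_of_le v (by omega)]
      exact h.det2_succ_eq_one (i + 1) (by omega)
  det2_first_pos i hi hin := by
    rw [eraseIdx_of_lt v (by omega)]
    rcases Nat.lt_or_ge i (j + 2) with hij | hij
    · rw [eraseIdx_of_lt v hij]; exact h.det2_first_pos i hi (by omega)
    · rw [eraseIdx_of_le v hij]; exact h.det2_first_pos (i + 1) (by omega) (by omega)
  last_eq_neg := by
    rw [eraseIdx_of_lt v (i := 0) (by omega), eraseIdx_of_le v (by omega), h.last_eq_neg]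

lemma det2_eraseIdx_left (h : IsHalfTurn v (m + 3)) (hj : j ≤ m)
    (hv : v (j + 2) = v (j + 1) + v (j + 3)) :
    det2 (eraseIdx v (j + 2) j) (eraseIdx v (j + 2) (j + 2)) = det2 (v j) (v (j + 2)) - 1 := by
  rw [eraseIdx_of_lt v (by omega), eraseIdx_of_le v le_rfl,
    show v (j + 2 + 1) = v (j + 2) - v (j + 1) by rw [hv]; abel, det2_sub_right,
    h.det2_succ_eq_one j (by omega)]

lemma det2_eraseIdx_right (h : IsHalfTurn v (m + 3)) (hj : j < m)
    (hv : v (j + 2) = v (j + 1) + v (j + 3)) :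
    det2 (eraseIdx v (j + 2) (j + 1)) (eraseIdx v (j + 2) (j + 3))
      = det2 (v (j + 2)) (v (j + 4)) - 1 := by
  rw [eraseIdx_of_lt v (by omega), eraseIdx_of_le v (by omega),
    show v (j + 1) = v (j + 2) - v (j + 3) by rw [hv]; abel, det2_sub_left,
    h.det2_succ_eq_one (j + 3) (by omega)]

/-- Contracting the vector `v (j + 2) = v (j + 1) + v (j + 3)` lowers `b` at both of its
neighbours by one; the neighbours that are interior absorb the `2` lost from the sum, and the
correction term `det2 (v 1) (v (m + 2))` accounts for a neighbour that is an end vector. -/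
lemma interiorSum_eraseIdx (h : IsHalfTurn v (m + 3)) (hj : j ≤ m)
    (hv : v (j + 2) = v (j + 1) + v (j + 3)) :
    interiorSum (eraseIdx v (j + 2)) m - det2 (eraseIdx v (j + 2) 1) (eraseIdx v (j + 2) (m + 1))
      = interiorSum v (m + 1) - det2 (v 1) (v (m + 2)) := by
  set w := eraseIdx v (j + 2)
  have hw_lt : ∀ i < j + 2, w i = v i := fun i hi => eraseIdx_of_lt v hi
  have hw_ge : ∀ i, j + 2 ≤ i → w i = v (i + 1) := fun i hi => eraseIdx_of_le v hi
  have hhead : ∑ i ∈ range j, (3 - det2 (w i) (w (i + 2)))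
      = ∑ i ∈ range j, (3 - det2 (v i) (v (i + 2))) := sum_congr rfl fun i hi => by
    have := mem_range.mp hi
    rw [hw_lt i (by omega), hw_lt (i + 2) (by omega)]
  have hleft : det2 (w j) (w (j + 2)) = _ := h.det2_eraseIdx_left hj hv
  have hmid := h.det2_of_eq_add hj hv
  obtain ⟨r, rfl⟩ := Nat.exists_eq_add_of_le hj
  rcases r with _ | r
  · have hlast : det2 (v 1) (v (j + 2)) = det2 (v 1) (v (j + 1)) + 1 := by
      have h01 : det2 (v 0) (v 1) = 1 := h.det2_succ_eq_one 0 (by omega)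
      rw [hv, det2_add_right, h.last_eq_neg, det2_neg_right, det2_anticomm (v 1) (v 0), neg_neg, h01]
    simp only [interiorSum, add_zero, sum_range_succ, hhead, hw_lt 1 (by omega),
      hw_lt (j + 1) (by omega), hleft, hlast, hmid]
    ring
  · have hright : det2 (w (j + 1)) (w (j + 3)) = _ := h.det2_eraseIdx_right (by omega) hv
    have htail : ∑ i ∈ range r, (3 - det2 (w (j + 2 + i)) (w (j + 2 + i + 2)))
        = ∑ i ∈ range r, (3 - det2 (v (j + 3 + i)) (v (j + 3 + i + 2))) :=
      sum_congr rfl fun i _ => by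
        rw [hw_ge (j + 2 + i) (by omega), hw_ge (j + 2 + i + 2) (by omega)]
        ring_nf
    simp only [interiorSum]
    rw [show j + (r + 1) + 1 + 1 = j + 3 + r by ring, show j + (r + 1) + 1 = j + 2 + r by ring,
      sum_range_add_add, sum_range_add_add, hhead, htail, hw_ge (j + 2 + r) (by omega),
      hw_lt 1 (by omega)]
    simp only [sum_range_succ, sum_range_zero, add_zero]
    rw [show j + 2 + r + 1 = j + 3 + r by ring, hleft, hright, hmid]
    ring

lemma det2_first_nonneg (h : IsHalfTurn v n) {i : ℕ} (hi : i ≤ n) :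
    0 ≤ det2 (v 0) (v i) := by
  rcases Nat.eq_zero_or_pos i with rfl | hi0
  · rw [det2_self]
  rcases hi.lt_or_eq with hin | rfl
  · exact (h.det2_first_pos i hi0 hin).le
  · rw [h.last_eq_neg, det2_neg_right, det2_self, neg_zero]

lemma det2_first_penultimate (h : IsHalfTurn v (n + 1)) : det2 (v 0) (v n) = 1 := by
  have := h.det2_succ_eq_one n (by omega)
  rwa [h.last_eq_neg, det2_neg_right, det2_anticomm, neg_neg] at this

theorem interiorSum_eq (h : IsHalfTurn v (m + 2)) :
    interiorSum v m = 3 + det2 (v 1) (v (m + 1)) := by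
  induction m generalizing v with
  | zero => simp [interiorSum, h.last_eq_neg, det2_neg_right, det2_self]
  | succ m ih =>
    obtain ⟨j, hj, hv⟩ := h.exists_eq_add
    have := ih (h.contract hj hv)
    have := h.interiorSum_eraseIdx hj hv
    linarith

lemma det2_second_nonneg (h : IsHalfTurn v n) {i : ℕ} (hi1 : 1 ≤ i) (hin : i ≤ n) :
    0 ≤ det2 (v 1) (v i) := by
  induction i, hi1 using Nat.le_induction with
  | base => rw [det2_self]
  | succ i hi1 ih =>
    have hp := det2_plucker (v 0) (v 1) (v i) (v (i + 1))
    rw [h.det2_succ_eq_one 0 (by omega), h.det2_succ_eq_one i (by omega)] at hp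
    have := h.det2_first_pos i (by omega) (by omega)
    have := h.det2_first_nonneg hin
    nlinarith [ih (by omega)]

end IsHalfTurn

lemma ZMod.natCast_ne_natCast_of_lt_of_lt {N a b : ℕ} (hab : a < b) (hb : b < a + N) :
    (a : ZMod N) ≠ b := by
  rw [Ne, ZMod.natCast_eq_natCast_iff, Nat.modEq_iff_dvd' hab.le]
  intro hd
  have := Nat.le_of_dvd (by omega) hd
  omega

namespace SmoothCompleteFan

variable {l : ℕ} (F : SmoothCompleteFan l)

lemma b_eq_det2 (i : ZMod (l + 1)) : F.b i = det2 (F.ρ (i - 1)) (F.ρ (i + 1)) := by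
  have h := congrArg (det2 (F.ρ (i - 1))) (F.rel i)
  have hs := F.smooth_ccw (i - 1)
  rw [sub_add_cancel] at hs
  rwa [det2_smul_right, hs, mul_one, det2_add_right, det2_self, zero_add] at h

/-- Otherwise `N • ρ j + ρ (j + 1)`, for `N` large, would lie in the interiors of both cone `j`
and cone `i`. -/
lemma ρ_ne_smul_add_smul {i j : ZMod (l + 1)} (hij : i ≠ j) {A C : ℤ} (hA : 0 < A) (hC : 0 < C) :
    F.ρ j ≠ A • F.ρ i + C • F.ρ (i + 1) := by
  intro h
  have hc := eq_det2_smul_add_det2_smul (F.smooth_ccw i) (F.ρ (j + 1))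
  set P := det2 (F.ρ (j + 1)) (F.ρ (i + 1))
  set Q := det2 (F.ρ i) (F.ρ (j + 1))
  obtain ⟨N, hN, hP, hQ⟩ : ∃ N : ℕ, 0 < N ∧ -P < N ∧ -Q < N :=
    ⟨(|P| + |Q|).toNat + 1, by omega, by have := neg_le_abs P; have := abs_nonneg Q; omega,
      by have := neg_le_abs Q; have := abs_nonneg P; omega⟩
  have hA' : 0 < N * A + P := by nlinarith
  have hC' : 0 < N * C + Q := by nlinarith
  obtain ⟨a, ha⟩ := Int.eq_ofNat_of_zero_le hA'.le
  obtain ⟨c, hc'⟩ := Int.eq_ofNat_of_zero_le hC'.le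
  refine F.proper j i hij.symm (N • F.ρ j + F.ρ (j + 1))
    ⟨⟨N, 1, hN, one_pos, by simp⟩, ⟨a, c, by omega, by omega, ?_⟩⟩
  rw [← ha, ← hc', h, hc]
  module

lemma b_natCast_add_one (i : ℕ) : F.b ↑(i + 1) = det2 (F.ρ ↑i) (F.ρ ↑(i + 2)) := by
  rw [b_eq_det2]
  congr 2 <;> push_cast <;> ring

lemma sum_Ico_three_sub_b (m : ℕ) :
    ∑ i ∈ Ico 1 (m + 2), (3 - F.b ↑i) = interiorSum (fun i => F.ρ ↑i) m := by
  rw [interiorSum, range_eq_Ico, ← sum_Ico_add' _ 0 (m + 1) 1]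
  simp only [b_natCast_add_one]

/-- The first ray to leave the half-plane would make `ρ (s + n)` lie in the interior of a cone or
coincide with another ray. -/
lemma isHalfTurn (s n : ℕ) (hn : n ≤ l + 1) (hs : F.ρ ↑(s + n) = -F.ρ ↑s) :
    IsHalfTurn (fun i => F.ρ ↑(s + i)) n where
  det2_succ_eq_one i _ := by rw [← add_assoc, Nat.cast_add_one]; exact F.smooth_ccw _
  last_eq_neg := by simpa using hs
  det2_first_pos i hi hin := by
    simp only [add_zero]
    induction i, hi using Nat.le_induction with
    | base => rw [Nat.cast_add_one]; simp [F.smooth_ccw]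
    | succ i hi ih =>
      have hYi := ih (by omega)
      have hsmooth : det2 (F.ρ ↑(s + i)) (F.ρ ↑(s + (i + 1))) = 1 := by
        rw [← add_assoc, Nat.cast_add_one]; exact F.smooth_ccw _
      have hc : F.ρ ↑(s + n) = (-det2 (F.ρ ↑s) (F.ρ ↑(s + (i + 1)))) • F.ρ ↑(s + i)
          + det2 (F.ρ ↑s) (F.ρ ↑(s + i)) • F.ρ ↑(s + (i + 1)) := by
        conv_lhs => rw [eq_det2_smul_add_det2_smul hsmooth (F.ρ ↑(s + n)), hs]
        rw [det2_neg_left, det2_neg_right, det2_anticomm (F.ρ ↑(s + i)), neg_neg]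
      by_contra! hY
      rcases hY.lt_or_eq with hY | hY
      · rw [← add_assoc, Nat.cast_add_one] at hc hY
        exact F.ρ_ne_smul_add_smul (i := ↑(s + i)) (j := ↑(s + n))
          (ZMod.natCast_ne_natCast_of_lt_of_lt (by omega) (by omega)) (neg_pos.mpr hY) hYi hc
      · rw [hY, neg_zero, zero_smul, zero_add] at hc
        have h1 := F.smooth_ccw ↑(s + n)
        rw [hc, det2_smul_left] at h1
        rw [Int.eq_one_of_mul_eq_one_right hYi.le h1, one_smul] at hc
        exact ZMod.natCast_ne_natCast_of_lt_of_lt (by omega) (by omega) (F.inj hc).symm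

end SmoothCompleteFan

/-- In the basis `(e, f)`, both sides equal `det2 w f - det2 p f`. -/
lemma det2_add_det2_sub_det2 {e f u p w : ℤ × ℤ} (he : det2 e f = 1) (hu : det2 e u = 1)
    (hp : det2 e p = -1) (hw : det2 e w = -1) :
    det2 w f + det2 u p - det2 f u = det2 p w := by
  rw [det2_eq_of_det2_eq_one he w f, det2_eq_of_det2_eq_one he u p,
    det2_eq_of_det2_eq_one he p w, he, hu, hp, hw, det2_self]
  ring

theorem gamma_nonneg_general (l : ℕ) (F : SmoothCompleteFan l)
    (α : ℕ) (hα1 : 1 < α) (hαl : α < l)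
    (hopp : F.ρ (α : ZMod (l + 1)) = - F.ρ 0)
    (γ : ℤ) (hγ : γ = (∑ i ∈ Finset.Ico 1 α, (3 - F.b ((i : ℕ) : ZMod (l + 1)))) - 3) :
    0 ≤ γ ∧ 0 ≤ F.b 0 + F.b ((α : ℕ) : ZMod (l + 1)) - γ := by
  obtain ⟨m, rfl⟩ : ∃ m, α = m + 2 := ⟨α - 2, by omega⟩
  have upper : IsHalfTurn (fun i => F.ρ ↑i) (m + 2) := by
    simpa using F.isHalfTurn 0 (m + 2) (by omega) (by simpa using hopp)
  have lower := F.isHalfTurn (m + 2) (l - (m + 2) + 1) (by omega) (by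
    rw [show m + 2 + (l - (m + 2) + 1) = l + 1 by omega, ZMod.natCast_self, hopp, neg_neg])
  have hγ' : γ = det2 (F.ρ 1) (F.ρ ↑(m + 1)) := by
    rw [hγ, F.sum_Ico_three_sub_b, upper.interiorSum_eq]
    simp
  have he : det2 (F.ρ 0) (F.ρ 1) = 1 := by simpa using F.smooth_ccw 0
  have hu : det2 (F.ρ 0) (F.ρ ↑(m + 1)) = 1 := by simpa using upper.det2_first_penultimate
  have hlast : m + 2 + (l - (m + 2)) = l := by omega
  have hp : det2 (F.ρ 0) (F.ρ ↑(m + 3)) = -1 := by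
    simpa only [add_zero, zero_add, hopp, det2_neg_left, neg_eq_iff_eq_neg]
      using lower.det2_succ_eq_one 0 (by omega)
  have hw : det2 (F.ρ 0) (F.ρ ↑l) = -1 := by
    simpa only [add_zero, hlast, hopp, det2_neg_left, neg_eq_iff_eq_neg]
      using lower.det2_first_penultimate
  have hlower : 0 ≤ det2 (F.ρ ↑(m + 3)) (F.ρ ↑l) := by
    simpa only [hlast] using lower.det2_second_nonneg (i := l - (m + 2)) (by omega) (by omega)
  have hl_neg_one : ((l : ℕ) : ZMod (l + 1)) = 0 - 1 := by
    rw [zero_sub, eq_neg_iff_add_eq_zero, ← Nat.cast_succ, ZMod.natCast_self]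
  constructor
  · simpa [hγ'] using upper.det2_second_nonneg (i := m + 1) (by omega) (by omega)
  · rw [F.b_eq_det2 0, ← hl_neg_one, zero_add, F.b_natCast_add_one (m + 1), hγ',
      det2_add_det2_sub_det2 he hu hp hw]
    exact hlower

/-- With `b 0 < 0`, `l > 2`, and `α` the unique index with `1 < α < l` and `ρ α = -ρ 0`,
the quantity `γ = (∑_{i=1}^{α-1} (3 - b i)) - 3` satisfies `γ ≥ 0` and
`b 0 + b α - γ ≥ 0`. -/
theorem gamma_nonneg (l : ℕ) (hl : 2 < l) (F : SmoothCompleteFan l)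
    (hb0 : F.b 0 < 0) (α : ℕ) (hα1 : 1 < α) (hαl : α < l)
    (hopp : F.ρ (α : ZMod (l + 1)) = - F.ρ 0)
    (γ : ℤ) (hγ : γ = (∑ i ∈ Finset.Ico 1 α, (3 - F.b ((i : ℕ) : ZMod (l + 1)))) - 3) :
    0 ≤ γ ∧ 0 ≤ F.b 0 + F.b ((α : ℕ) : ZMod (l + 1)) - γ :=
  gamma_nonneg_general l F α hα1 hαl hopp γ hγ
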